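/- Let F be a field and let (x₁ₙ), (x₂ₙ), (x₃ₙ) be sequences of nonzero elements of F satisfying the A₃ cluster-map recurrences x₁,ₙ₊₁·x₁,ₙ = x₂,ₙ + 1, x₂,ₙ₊₁·x₂,ₙ = x₁,ₙ₊₁·x₃,ₙ + 1, and x₃,ₙ₊₁·x₃,ₙ = x₂,ₙ₊₁ + 1 for all n. Then the orbit is periodic with period 6: x₁,ₙ₊₆ = x₁,ₙ, x₂,ₙ₊₆ = x₂,ₙ, and x₃,ₙ₊₆ = x₃,ₙ for all n. -/
import Mathlib

/-- Half-period: the cube of the A₃ cluster map sends `(a,b,c)` to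
`((b+1)/c, b, (b+1)/a)`. -/
lemma a3_cluster_map_half_period {F : Type*} [Field F]
    (x₁ x₂ x₃ : ℕ → F)
    (hx₁ : ∀ n, x₁ n ≠ 0) (hx₂ : ∀ n, x₂ n ≠ 0) (hx₃ : ∀ n, x₃ n ≠ 0)
    (h₁ : ∀ n, x₁ (n + 1) * x₁ n = x₂ n + 1)
    (h₂ : ∀ n, x₂ (n + 1) * x₂ n = x₁ (n + 1) * x₃ n + 1)
    (h₃ : ∀ n, x₃ (n + 1) * x₃ n = x₂ (n + 1) + 1) :
    ∀ n, x₁ (n + 3) * x₃ n = x₂ n + 1 ∧ x₂ (n + 3) = x₂ n ∧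
      x₃ (n + 3) * x₁ n = x₂ n + 1 := by
  intro n
  have h₁1 := h₁ n
  have h₂1 := h₂ n
  have h₃1 := h₃ n
  have h₁2 := h₁ (n + 1)
  have h₂2 := h₂ (n + 1)
  have h₃2 := h₃ (n + 1)
  have h₁3 := h₁ (n + 2)
  have h₂3 := h₂ (n + 2)
  have h₃3 := h₃ (n + 2)
  have e12 : n + 1 + 1 = n + 2 := rfl
  have e23 : n + 2 + 1 = n + 3 := rfl
  rw [e12] at h₁2 h₂2 h₃2
  rw [e23] at h₁3 h₂3 h₃3
  -- Stage 1
  have E1 : x₁ (n + 1) * x₁ n = x₂ n + 1 := h₁1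
  have E2 : x₂ (n + 1) * (x₁ n * x₂ n) = (x₂ n + 1) * x₃ n + x₁ n := by
    linear_combination x₁ n * h₂1 + x₃ n * h₁1
  have E3 : x₃ (n + 1) * (x₁ n * x₂ n * x₃ n) = (x₂ n + 1) * (x₁ n + x₃ n) := by
    linear_combination x₁ n * x₂ n * h₃1 + E2
  have hp : x₂ n + 1 ≠ 0 := by
    rw [← E1]; exact mul_ne_zero (hx₁ _) (hx₁ _)
  have hq : (x₂ n + 1) * x₃ n + x₁ n ≠ 0 := by
    rw [← E2]; exact mul_ne_zero (hx₂ _) (mul_ne_zero (hx₁ _) (hx₂ _))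
  have hr : (x₂ n + 1) * (x₁ n + x₃ n) ≠ 0 := by
    rw [← E3]
    exact mul_ne_zero (hx₃ _) (mul_ne_zero (mul_ne_zero (hx₁ _) (hx₂ _)) (hx₃ _))
  -- Stage 2
  have F1 : x₁ (n + 2) * x₂ n = x₁ n + x₃ n := by
    refine mul_left_cancel₀ hp ?_
    linear_combination x₁ n * x₂ n * h₁2 + E2 - (x₁ (n + 2) * x₂ n) * E1
  have hs : x₁ n + x₃ n ≠ 0 := by
    rw [← F1]; exact mul_ne_zero (hx₁ _) (hx₂ _)
  have F2 : x₂ (n + 2) * (x₂ n * x₃ n) = x₁ n + x₃ n + x₁ n * x₂ n := by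
    refine mul_left_cancel₀ hq ?_
    linear_combination x₁ n * x₂ n ^ 2 * x₃ n * h₂2 - (x₂ (n + 2) * x₂ n * x₃ n) * E2 +
      (x₁ (n + 2) * x₂ n) * E3 + ((x₂ n + 1) * (x₁ n + x₃ n)) * F1
  have ht : x₁ n + x₃ n + x₁ n * x₂ n ≠ 0 := by
    rw [← F2]; exact mul_ne_zero (hx₂ _) (mul_ne_zero (hx₂ _) (hx₃ _))
  have F3 : x₃ (n + 2) = x₁ n := by
    refine mul_left_cancel₀ hr ?_
    linear_combination x₁ n * x₂ n * x₃ n * h₃2 - x₃ (n + 2) * E3 + x₁ n * F2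
  -- Stage 3
  have G1 : x₁ (n + 3) * x₃ n = x₂ n + 1 := by
    refine mul_left_cancel₀ hs ?_
    linear_combination x₂ n * x₃ n * h₁3 - (x₁ (n + 3) * x₃ n) * F1 + F2
  have G2 : x₂ (n + 3) = x₂ n := by
    refine mul_left_cancel₀ ht ?_
    linear_combination x₂ n * x₃ n * h₂3 - x₂ (n + 3) * F2 +
      (x₁ (n + 3) * x₂ n * x₃ n) * F3 + x₁ n * x₂ n * G1
  have G3 : x₃ (n + 3) * x₁ n = x₂ n + 1 := by
    linear_combination h₃3 - x₃ (n + 3) * F3 + G2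
  exact ⟨G1, G2, G3⟩

/-- The A₃ cluster map, given by the composition of the three cluster
mutations `x₁'x₁ = x₂+1`, `x₂'x₂ = x₁'x₃+1`, `x₃'x₃ = x₂'+1`, is periodic with
period 6 on any orbit of nonzero elements of a field. -/
theorem a3_cluster_map_period_six {F : Type*} [Field F]
    (x₁ x₂ x₃ : ℕ → F)
    (hx₁ : ∀ n, x₁ n ≠ 0) (hx₂ : ∀ n, x₂ n ≠ 0) (hx₃ : ∀ n, x₃ n ≠ 0)
    (h₁ : ∀ n, x₁ (n + 1) * x₁ n = x₂ n + 1)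
    (h₂ : ∀ n, x₂ (n + 1) * x₂ n = x₁ (n + 1) * x₃ n + 1)
    (h₃ : ∀ n, x₃ (n + 1) * x₃ n = x₂ (n + 1) + 1) :
    ∀ n, x₁ (n + 6) = x₁ n ∧ x₂ (n + 6) = x₂ n ∧ x₃ (n + 6) = x₃ n := by
  intro n
  obtain ⟨A1, A2, A3⟩ := a3_cluster_map_half_period x₁ x₂ x₃ hx₁ hx₂ hx₃ h₁ h₂ h₃ n
  obtain ⟨B1, B2, B3⟩ := a3_cluster_map_half_period x₁ x₂ x₃ hx₁ hx₂ hx₃ h₁ h₂ h₃ (n + 3)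
  have e36 : n + 3 + 3 = n + 6 := rfl
  rw [e36] at B1 B2 B3
  rw [A2] at B1 B2 B3
  refine ⟨?_, B2, ?_⟩
  · refine mul_right_cancel₀ (hx₃ (n + 3)) ?_
    rw [B1, ← A3, mul_comm]
  · refine mul_right_cancel₀ (hx₁ (n + 3)) ?_
    rw [B3, ← A1, mul_comm]
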